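/- arXiv:2010.08074 — 3 statements merged into one kernel-verified Lean document; each statement's English description precedes it below -/
import Mathlib

section
/- The triple consisting of the set of n-element subsets of {1,...,k}, the cyclic group Z_k acting by adding 1 mod k to each element, and the Gaussian binomial coefficient [k choose n]_q exhibits the cyclic sieving phenomenon: for every r ≥ 0, the number of n-subsets S of Z/k with S + r = S equals the evaluation of [k choose n]_q at q = exp(2πi r/k). -/
/-!
Let `m` be the additive order of `r` in `ZMod k`. A finset fixed by translation by `r` is a
union of cosets of the subgroup generated by `r`, so the fixed `n`-sets correspond to the
`(n / m)`-subsets of a quotient of size `k / m`, and there are none unless `m ∣ n`. On the other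
side, `exp (2πi r / k)` is a primitive `m`-th root of unity `ζ`, and the q-Lucas theorem
`[a, b]_ζ = C(a / m, b / m) [a % m, b % m]_ζ` gives the same value for `[k, n]_ζ`. The q-Lucas
theorem follows from the two q-Pascal recursions by induction, once one knows that
`[m, j]_ζ = 0` for `0 < j < m`; that in turn comes from
`(1 - ζ^(m-j)) [m, j]_ζ = (1 - ζ^(j+1)) [m, j+1]_ζ`.
-/

open Polynomial

/-- The Gaussian (q-)binomial coefficient `[m choose j]_q` as a polynomial,
defined by the q-Pascal recursion `[m+1, j+1]_q = [m, j]_q + q^(j+1) [m, j+1]_q`. -/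
noncomputable def gaussBinom : ℕ → ℕ → Polynomial ℂ
  | _, 0 => 1
  | 0, _ + 1 => 0
  | m + 1, j + 1 => gaussBinom m j + X ^ (j + 1) * gaussBinom m (j + 1)

open Finset Pointwise

@[simp]
lemma gaussBinom_zero_right (m : ℕ) : gaussBinom m 0 = 1 := by
  cases m <;> rfl

lemma gaussBinom_succ_succ (m j : ℕ) :
    gaussBinom (m + 1) (j + 1) = gaussBinom m j + X ^ (j + 1) * gaussBinom m (j + 1) := rfl

lemma gaussBinom_eq_zero_of_lt {m j : ℕ} (h : m < j) : gaussBinom m j = 0 := by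
  induction m generalizing j with
  | zero => obtain ⟨j, rfl⟩ := Nat.exists_eq_succ_of_ne_zero h.ne'; rfl
  | succ m ih =>
    obtain ⟨j, rfl⟩ := Nat.exists_eq_succ_of_ne_zero (Nat.ne_zero_of_lt h)
    rw [gaussBinom_succ_succ, ih (by omega), ih (by omega), mul_zero, add_zero]

@[simp]
lemma gaussBinom_self (m : ℕ) : gaussBinom m m = 1 := by
  induction m with
  | zero => rfl
  | succ m ih => rw [gaussBinom_succ_succ, ih, gaussBinom_eq_zero_of_lt m.lt_succ_self]; ring

/-- The second q-Pascal recursion `[m+1, j+1] = q^(m-j) [m, j] + [m, j+1]`, with `m = a + b`,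
`j = b` so that no subtraction occurs. -/
lemma gaussBinom_add_succ_succ (a b : ℕ) :
    gaussBinom (a + b + 1) (b + 1) = X ^ a * gaussBinom (a + b) b + gaussBinom (a + b) (b + 1) := by
  induction a generalizing b with
  | zero => simp [gaussBinom_eq_zero_of_lt]
  | succ a iha =>
    induction b with
    | zero =>
      have h := iha 0
      simp only [add_zero, gaussBinom_zero_right, mul_one] at h ⊢
      linear_combination gaussBinom_succ_succ (a + 1) 0 + X * h - gaussBinom_succ_succ a 0 +
        gaussBinom_zero_right (a + 1) - gaussBinom_zero_right a
    | succ b ihb =>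
      have hb := iha (b + 1)
      rw [← add_assoc, add_right_comm a b 1] at hb
      linear_combination gaussBinom_succ_succ (a + 1 + b + 1) (b + 1) + ihb + X ^ (b + 2) * hb -
        X ^ (a + 1) * gaussBinom_succ_succ (a + 1 + b) b - gaussBinom_succ_succ (a + 1 + b) (b + 1)

lemma one_sub_pow_mul_eval_gaussBinom (ζ : ℂ) (a b : ℕ) :
    (1 - ζ ^ a) * (gaussBinom (a + b) b).eval ζ =
      (1 - ζ ^ (b + 1)) * (gaussBinom (a + b) (b + 1)).eval ζ := by
  have h₁ := congrArg (eval ζ) (gaussBinom_succ_succ (a + b) b)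
  have h₂ := congrArg (eval ζ) (gaussBinom_add_succ_succ a b)
  simp only [eval_add, eval_mul, eval_pow, eval_X] at h₁ h₂
  linear_combination h₂ - h₁

lemma Nat.add_one_mod_div_cases {m : ℕ} (hm : 0 < m) (a : ℕ) :
    (a % m + 1 < m ∧ (a + 1) % m = a % m + 1 ∧ (a + 1) / m = a / m) ∨
      (a % m + 1 = m ∧ (a + 1) % m = 0 ∧ (a + 1) / m = a / m + 1) := by
  have ha := Nat.mod_add_div a m
  rcases (Nat.succ_le_of_lt (Nat.mod_lt a hm)).lt_or_eq with h | h
  · refine .inl ⟨h, ((Nat.div_mod_unique hm).2 ⟨?_, h⟩).symm⟩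
    omega
  · refine .inr ⟨h, ((Nat.div_mod_unique hm).2 ⟨?_, hm⟩).symm⟩
    rw [mul_add, mul_one]; omega

namespace IsPrimitiveRoot

variable {ζ : ℂ} {m : ℕ}

lemma eval_gaussBinom_eq_zero (hζ : IsPrimitiveRoot ζ m) {j : ℕ} (hj₀ : 0 < j) (hjm : j < m) :
    (gaussBinom m j).eval ζ = 0 := by
  induction j with
  | zero => omega
  | succ j ih =>
    have hrel := one_sub_pow_mul_eval_gaussBinom ζ (m - j) j
    rw [Nat.sub_add_cancel (by omega)] at hrel
    have hlhs : (1 - ζ ^ (m - j)) * (gaussBinom m j).eval ζ = 0 := by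
      rcases Nat.eq_zero_or_pos j with rfl | hj
      · simp [hζ.pow_eq_one]
      · rw [ih hj (by omega), mul_zero]
    have hne : 1 - ζ ^ (j + 1) ≠ 0 :=
      sub_ne_zero.2 (hζ.pow_ne_one_of_pos_of_lt j.succ_ne_zero hjm).symm
    exact (mul_eq_zero.1 (hrel ▸ hlhs)).resolve_left hne

/-- q-Lucas theorem. -/
theorem eval_gaussBinom (hζ : IsPrimitiveRoot ζ m) (hm : 0 < m) (k n : ℕ) :
    (gaussBinom k n).eval ζ = (k / m).choose (n / m) * (gaussBinom (k % m) (n % m)).eval ζ := by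
  induction k generalizing n with
  | zero =>
    rcases Nat.eq_zero_or_pos n with rfl | hn
    · simp
    rw [gaussBinom_eq_zero_of_lt hn, eval_zero, Nat.zero_div, Nat.zero_mod]
    rcases Nat.eq_zero_or_pos (n % m) with hnm | hnm
    · have hmn : m ≤ n := Nat.le_of_dvd hn (Nat.dvd_of_mod_eq_zero hnm)
      rw [Nat.choose_eq_zero_of_lt (Nat.div_pos hmn hm)]
      simp
    · rw [gaussBinom_eq_zero_of_lt hnm]
      simp
  | succ k ih =>
    rcases n with _ | n
    · simp
    have hstep := congrArg (eval ζ) (gaussBinom_succ_succ k n)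
    simp only [eval_add, eval_mul, eval_pow, eval_X] at hstep
    rw [hstep, ih, ih, pow_eq_pow_mod (n + 1) hζ.pow_eq_one]
    rcases Nat.add_one_mod_div_cases hm k with ⟨hk, hkmod, hkdiv⟩ | ⟨hk, hkmod, hkdiv⟩ <;>
    rcases Nat.add_one_mod_div_cases hm n with ⟨hn, hnmod, hndiv⟩ | ⟨hn, hnmod, hndiv⟩ <;>
    rw [hkmod, hkdiv, hnmod, hndiv]
    · have hpascal := congrArg (eval ζ) (gaussBinom_succ_succ (k % m) (n % m))
      simp only [eval_add, eval_mul, eval_pow, eval_X] at hpascal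
      linear_combination -((k / m).choose (n / m) : ℂ) * hpascal
    · rw [gaussBinom_eq_zero_of_lt (by omega : k % m < n % m)]
      simp
    · have hpascal := congrArg (eval ζ) (gaussBinom_succ_succ (k % m) (n % m))
      simp only [eval_add, eval_mul, eval_pow, eval_X] at hpascal
      rw [hk, hζ.eval_gaussBinom_eq_zero (n % m).succ_pos (by omega)] at hpascal
      rw [gaussBinom_eq_zero_of_lt (n % m).succ_pos, eval_zero, mul_zero]
      linear_combination -((k / m).choose (n / m) : ℂ) * hpascal
    · rw [show k % m = n % m by omega, Nat.choose_succ_succ']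
      simp

theorem eval_gaussBinom_mul (hζ : IsPrimitiveRoot ζ m) (hm : 0 < m) (d n : ℕ) :
    (gaussBinom (d * m) n).eval ζ = if m ∣ n then (d.choose (n / m) : ℂ) else 0 := by
  rw [hζ.eval_gaussBinom hm, Nat.mul_mod_left, Nat.mul_div_cancel d hm]
  split_ifs with hmn
  · simp [Nat.mod_eq_zero_of_dvd hmn]
  · rw [gaussBinom_eq_zero_of_lt (Nat.pos_of_ne_zero (mt Nat.dvd_of_mod_eq_zero hmn))]
    simp

end IsPrimitiveRoot

lemma IsPrimitiveRoot.pow_div_gcd {M : Type*} [CommMonoid M] {ζ : M} {k : ℕ}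
    (h : IsPrimitiveRoot ζ k) (hk : k ≠ 0) (r : ℕ) :
    IsPrimitiveRoot (ζ ^ r) (k / k.gcd r) := by
  rw [h.eq_orderOf, ← (h.isOfFinOrder hk).orderOf_pow]
  exact .orderOf _

lemma Complex.isPrimitiveRoot_exp_natCast_mul_div (r : ℕ) {k : ℕ} (hk : k ≠ 0) :
    IsPrimitiveRoot (exp (2 * Real.pi * I * r / k)) (k / k.gcd r) := by
  rw [show 2 * Real.pi * I * r / k = r * (2 * Real.pi * I / k) by ring, exp_nat_mul]
  exact (isPrimitiveRoot_exp k hk).pow_div_gcd hk r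

lemma Finset.card_filter_mul_card_eq (α : Type*) [Fintype α] [DecidableEq α] {c : ℕ}
    (hc : c ≠ 0) (n : ℕ) :
    #{T : Finset α | c * #T = n} = if c ∣ n then (Fintype.card α).choose (n / c) else 0 := by
  split_ifs with h
  · obtain ⟨j, rfl⟩ := h
    rw [Nat.mul_div_cancel_left j (Nat.pos_of_ne_zero hc), ← card_univ, ← card_powersetCard,
      powersetCard_eq_filter]
    simp only [powerset_univ, Nat.mul_left_cancel_iff (Nat.pos_of_ne_zero hc)]
  · rw [card_eq_zero, filter_eq_empty_iff]
    exact fun T _ hT => h ⟨#T, hT.symm⟩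

section FixedFinsets

variable {G : Type*} [AddCommGroup G]

lemma Finset.image_add_right_eq_self_iff [DecidableEq G] {S : Finset G} {g : G} :
    S.image (· + g) = S ↔ AddSubgroup.zmultiples g ≤ AddAction.stabilizer G S := by
  simp only [AddSubgroup.zmultiples_le, AddAction.mem_stabilizer_iff, vadd_finset_def,
    vadd_eq_add, add_comm g]

variable [Fintype G] {H : AddSubgroup G} [DecidablePred (· ∈ H)]

lemma Finset.image_mk_filter_mk_mem (T : Finset (G ⧸ H)) :
    ({x | (x : G ⧸ H) ∈ T} : Finset G).image (↑) = T := by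
  ext q
  obtain ⟨x, rfl⟩ := QuotientAddGroup.mk_surjective q
  simp only [mem_image, mem_filter, mem_univ, true_and]
  exact ⟨fun ⟨y, hy, hyx⟩ => hyx ▸ hy, fun hx => ⟨x, hx, rfl⟩⟩

lemma Finset.card_filter_mk_mem (T : Finset (G ⧸ H)) :
    #({x | (x : G ⧸ H) ∈ T} : Finset G) = Nat.card H * #T := by
  calc #({x | (x : G ⧸ H) ∈ T} : Finset G)
      = Nat.card (QuotientAddGroup.mk ⁻¹' (T : Set (G ⧸ H))) := by
        rw [← Nat.card_eq_finsetCard]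
        exact Nat.card_congr (Equiv.subtypeEquivRight (by simp))
    _ = Nat.card (H × T) := Nat.card_congr (QuotientAddGroup.preimageMkEquivAddSubgroupProdSet H T)
    _ = Nat.card H * #T := by rw [Nat.card_prod, Nat.card_eq_finsetCard]

variable [DecidableEq G]

lemma Finset.filter_mk_mem_image_mk_eq_self {S : Finset G} (hS : H ≤ AddAction.stabilizer G S) :
    ({x | (x : G ⧸ H) ∈ S.image (↑)} : Finset G) = S := by
  ext x
  simp only [mem_filter, mem_univ, true_and, mem_image, QuotientAddGroup.eq]
  refine ⟨fun ⟨y, hy, hyx⟩ => ?_, fun hx => ⟨x, hx, by simp⟩⟩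
  have hmem := vadd_mem_vadd_finset (a := -y + x) hy
  rwa [AddAction.mem_stabilizer_iff.1 (hS hyx), vadd_eq_add, add_comm, add_neg_cancel_left] at hmem

lemma Finset.le_stabilizer_filter_mk_mem (T : Finset (G ⧸ H)) :
    H ≤ AddAction.stabilizer G ({x | (x : G ⧸ H) ∈ T} : Finset G) := by
  intro h hh
  rw [AddAction.mem_stabilizer_iff]
  refine eq_of_subset_of_card_le ?_ (card_vadd_finset h _).ge
  intro x hx
  obtain ⟨y, hy, rfl⟩ := mem_vadd_finset.1 hx
  simpa [add_comm h, QuotientAddGroup.mk_add_of_mem y hh] using hy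

theorem Finset.card_filter_card_eq_image_add_right_eq_self (g : G) (n : ℕ) :
    #{S : Finset G | #S = n ∧ S.image (· + g) = S} =
      if addOrderOf g ∣ n then (Fintype.card G / addOrderOf g).choose (n / addOrderOf g)
      else 0 := by
  classical
  set H := AddSubgroup.zmultiples g
  have hH : Nat.card H = addOrderOf g := Nat.card_zmultiples g
  have hquot : Fintype.card (G ⧸ H) = Fintype.card G / addOrderOf g := by
    rw [← Nat.card_eq_fintype_card, ← Nat.card_eq_fintype_card, ← hH,
      AddSubgroup.card_eq_card_quotient_mul_card_addSubgroup H,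
      Nat.mul_div_cancel _ (hH ▸ addOrderOf_pos g)]
  have hbij : #{S : Finset G | #S = n ∧ S.image (· + g) = S} =
      #{T : Finset (G ⧸ H) | Nat.card H * #T = n} := by
    simp only [image_add_right_eq_self_iff]
    refine card_nbij' (fun S : Finset G => S.image ((↑) : G → G ⧸ H))
      (fun T => ({x | (x : G ⧸ H) ∈ T} : Finset G))
      (fun S hS => ?_) (fun T hT => ?_) (fun S hS => ?_) (fun T _ => image_mk_filter_mk_mem T) <;>
    simp only [coe_filter, mem_univ, true_and, Set.mem_ofPred_eq] at *
    · rw [← card_filter_mk_mem, filter_mk_mem_image_mk_eq_self hS.2, hS.1]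
    · exact ⟨by rw [card_filter_mk_mem, hT], le_stabilizer_filter_mk_mem T⟩
    · exact filter_mk_mem_image_mk_eq_self hS.2
  rw [hbij, card_filter_mul_card_eq _ (hH ▸ (addOrderOf_pos g).ne'), hH, hquot]

end FixedFinsets

/-- Cyclic sieving for `n`-element subsets of `{1,…,k}` under the `ℤ/k` action adding `1`
mod `k`, with sieving polynomial the Gaussian binomial coefficient `[k choose n]_q`. -/
theorem stmt_0 (n k : ℕ) [NeZero k] (r : ℕ) :
    ((Finset.univ.filter (fun S : Finset (ZMod k) =>
        S.card = n ∧ S.image (· + (r : ZMod k)) = S)).card : ℂ) =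
      (gaussBinom k n).eval (Complex.exp (2 * Real.pi * Complex.I * r / k)) := by
  have hk := NeZero.ne k
  have hζ : IsPrimitiveRoot (Complex.exp (2 * Real.pi * Complex.I * r / k))
      (addOrderOf (r : ZMod k)) := by
    rw [ZMod.addOrderOf_coe r hk]
    exact Complex.isPrimitiveRoot_exp_natCast_mul_div r hk
  set m := addOrderOf (r : ZMod k)
  have hdvd : m ∣ k := ZMod.card k ▸ addOrderOf_dvd_card
  have heval := hζ.eval_gaussBinom_mul (addOrderOf_pos _) (k / m) n
  rw [Nat.div_mul_cancel hdvd] at heval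
  rw [Finset.card_filter_card_eq_image_add_right_eq_self, ZMod.card, heval]
  push_cast
  rfl
end

section
/- For positive integers n ≤ k, the sequence of complete homogeneous symmetric polynomials h_{k-n+1}(x_1,...,x_n), h_{k-n+2}(x_1,...,x_n), ..., h_k(x_1,...,x_n) is a regular sequence in the polynomial ring C[x_1,...,x_n]. -/
/-!
Write `J_i = (h_a, …, h_{a+i-1})`. From
`h_{m+1}(x_0, …, x_n) = x_0 h_m(x_0, …, x_n) + h_{m+1}(x_1, …, x_n)` one gets
`J_{i+1} = (h_a) + (h_{a+1}, …, h_{a+i})(x_1, …, x_n)`, and modulo `J_{i+1}` the next generator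
`h_{a+i+1}` may be replaced by `h_{a+i+1}(x_1, …, x_n)`, which does not involve `x_0`.
As a polynomial in `x_0` over the remaining variables, `h_a` is monic, and modulo a monic
polynomial plus an extended ideal `I[x_0]`, a coefficient that is regular modulo `I` stays
regular (reduce by division with remainder over the quotient by `I`). This gives an induction
on `i` that trades one variable for a shift `a ↦ a + 1`, ending at `i = 0`, where `h_a` is a
non-zero-divisor because it is monic in `x_0`.
-/

open MvPolynomial

namespace Ideal

variable {S : Type*} [CommRing S]

lemma Quotient.isLeftRegular_mk_iff {I : Ideal S} {c : S} :
    IsLeftRegular (Quotient.mk I c) ↔ ∀ x, c * x ∈ I → x ∈ I := by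
  refine ⟨fun hc x hx => ?_, fun hc => ?_⟩
  · rw [← Quotient.eq_zero_iff_mem] at hx ⊢
    exact hc (by simpa using hx)
  · rintro ⟨x⟩ ⟨y⟩ hxy
    refine Quotient.eq.mpr (hc _ ?_)
    simpa [mul_sub] using Quotient.eq.mp hxy

lemma Quotient.isLeftRegular_mk_map_equiv_iff {T : Type*} [CommRing T] (e : S ≃+* T)
    {I : Ideal S} {c : S} :
    IsLeftRegular (Quotient.mk (I.map e) (e c)) ↔ IsLeftRegular (Quotient.mk I c) := by
  simp only [Quotient.isLeftRegular_mk_iff, e.surjective.forall, ← map_mul,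
    apply_mem_of_equiv_iff]

lemma span_singleton_sup_eq_of_sub_mem {L : Ideal S} {x y : S} (h : x - y ∈ L) :
    span {x} ⊔ L = span {y} ⊔ L := by
  have le_of_sub_mem (x y : S) (h : x - y ∈ L) : span {x} ⊔ L ≤ span {y} ⊔ L := by
    refine sup_le ((span_singleton_le_iff_mem _).mpr ?_) le_sup_right
    simpa using add_mem (mem_sup_left (mem_span_singleton_self y)) (mem_sup_right h)
  exact le_antisymm (le_of_sub_mem x y h) (le_of_sub_mem y x (sub_mem_comm_iff.mp h))

end Ideal

namespace Polynomial

variable {S : Type*} [CommRing S]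

lemma Monic.mem_span_singleton_of_C_mul_mem {g p : S[X]} (hg : g.Monic) {c : S}
    (hc : IsLeftRegular c) (h : C c * p ∈ Ideal.span {g}) : p ∈ Ideal.span {g} := by
  rw [Ideal.mem_span_singleton, ← modByMonic_eq_zero_iff_dvd hg] at h ⊢
  rw [← smul_eq_C_mul, smul_modByMonic] at h
  ext k
  exact hc (by simpa using congr_arg (coeff · k) h)

lemma Monic.isLeftRegular_mk_C {G : S[X]} (hG : G.Monic) {I : Ideal S} {c : S}
    (hc : IsLeftRegular (Ideal.Quotient.mk I c)) :
    IsLeftRegular (Ideal.Quotient.mk (Ideal.span {G} ⊔ I.map C) (C c)) := by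
  set π := mapRingHom (Ideal.Quotient.mk I)
  have hcomap : Ideal.span {G} ⊔ I.map C = (Ideal.span {π G}).comap π := by
    rw [← Set.image_singleton, ← Ideal.map_span, Ideal.comap_map_of_surjective' _
      (map_surjective _ Ideal.Quotient.mk_surjective), ker_mapRingHom, Ideal.mk_ker]
  rw [Ideal.Quotient.isLeftRegular_mk_iff, hcomap]
  intro p hp
  simp only [Ideal.mem_comap, map_mul] at hp ⊢
  exact (hG.map _).mem_span_singleton_of_C_mul_mem hc (by simpa [π] using hp)

end Polynomial

namespace MvPolynomial

section CommSemiring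

variable {R : Type*} [CommSemiring R]

lemma hsymm_option_succ (σ : Type*) [Fintype σ] [DecidableEq σ] (m : ℕ) :
    hsymm (Option σ) R (m + 1) =
      X none * hsymm (Option σ) R m + rename some (hsymm σ R (m + 1)) := by
  rw [hsymm, ← Equiv.sum_comp (symOptionSuccEquiv (α := σ) (n := m)).symm
      (fun s : Sym (Option σ) (m + 1) => (s.1.map X).prod),
    Fintype.sum_sum_type, hsymm, hsymm, Finset.mul_sum, map_sum]
  congr 1 <;> refine Finset.sum_congr rfl fun s _ => ?_
  · simp [symOptionSuccEquiv, Sym.cons, Multiset.prod_cons]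
  · simp [symOptionSuccEquiv, map_multiset_prod, Multiset.map_map]

lemma hsymm_fin_succ_succ (n m : ℕ) :
    hsymm (Fin (n + 1)) R (m + 1) =
      X 0 * hsymm (Fin (n + 1)) R m + rename Fin.succ (hsymm (Fin n) R (m + 1)) := by
  rw [← rename_hsymm _ R (m + 1) (_root_.finSuccEquiv n).symm, hsymm_option_succ, map_add,
    map_mul, rename_X, rename_rename, rename_hsymm]
  congr 3

lemma finSuccEquiv_rename_succ {n : ℕ} (p : MvPolynomial (Fin n) R) :
    finSuccEquiv R n (rename Fin.succ p) = Polynomial.C p := by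
  induction p using MvPolynomial.induction_on with
  | C a => simp [finSuccEquiv_apply]
  | add p q hp hq => simp [hp, hq]
  | mul_X p i hp => simp [hp, finSuccEquiv_X_succ]

lemma finSuccEquiv_hsymm (n m : ℕ) :
    finSuccEquiv R n (hsymm (Fin (n + 1)) R m) =
      ∑ j ∈ Finset.range (m + 1),
        Polynomial.C (hsymm (Fin n) R (m - j)) * Polynomial.X ^ j := by
  induction m with
  | zero => simp [hsymm_zero]
  | succ m ih =>
    rw [hsymm_fin_succ_succ, map_add, map_mul, finSuccEquiv_X_zero, ih, finSuccEquiv_rename_succ,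
      Finset.mul_sum, Finset.sum_range_succ' _ (m + 1)]
    congr 1
    · refine Finset.sum_congr rfl fun j _ => ?_
      rw [Nat.add_sub_add_right]
      ring
    · simp

lemma monic_finSuccEquiv_hsymm (n m : ℕ) :
    (finSuccEquiv R n (hsymm (Fin (n + 1)) R m)).Monic := by
  rw [finSuccEquiv_hsymm]
  apply Polynomial.monic_of_natDegree_le_of_coeff_eq_one m
  · refine Polynomial.natDegree_sum_le_of_forall_le _ _ fun j hj => ?_
    exact (Polynomial.natDegree_C_mul_X_pow_le _ _).trans (Finset.mem_range_succ_iff.mp hj)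
  · simp

noncomputable def hsymmIdeal (σ R : Type*) [Fintype σ] [DecidableEq σ] [CommSemiring R]
    (a i : ℕ) : Ideal (MvPolynomial σ R) :=
  Ideal.span ((fun s => hsymm σ R (a + s)) '' Set.Iio i)

variable {σ : Type*} [Fintype σ] [DecidableEq σ]

lemma hsymmIdeal_zero (a : ℕ) : hsymmIdeal σ R a 0 = ⊥ := by
  simp [hsymmIdeal]

lemma hsymmIdeal_succ (a i : ℕ) :
    hsymmIdeal σ R a (i + 1) = Ideal.span {hsymm σ R (a + i)} ⊔ hsymmIdeal σ R a i := by
  rw [hsymmIdeal, hsymmIdeal, Set.Iio_add_one_eq_Iic, ← Set.Iio_insert, Set.image_insert_eq,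
    Ideal.span_insert]

lemma hsymm_mem_hsymmIdeal {a i s : ℕ} (hs : s < i) :
    hsymm σ R (a + s) ∈ hsymmIdeal σ R a i :=
  Ideal.subset_span ⟨s, hs, rfl⟩

end CommSemiring

section CommRing

variable {R : Type*} [CommRing R]

lemma hsymm_sub_rename_succ_mem_hsymmIdeal (n a i : ℕ) :
    hsymm (Fin (n + 1)) R (a + (i + 1)) - rename Fin.succ (hsymm (Fin n) R (a + 1 + i)) ∈
      hsymmIdeal (Fin (n + 1)) R a (i + 1) := by
  rw [Nat.add_right_comm, ← add_assoc, hsymm_fin_succ_succ, add_sub_cancel_right]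
  exact Ideal.mul_mem_left _ _ (hsymm_mem_hsymmIdeal (Nat.lt_succ_self i))

lemma hsymmIdeal_fin_succ (n a i : ℕ) :
    hsymmIdeal (Fin (n + 1)) R a (i + 1) =
      Ideal.span {hsymm (Fin (n + 1)) R a} ⊔
        (hsymmIdeal (Fin n) R (a + 1) i).map (rename Fin.succ) := by
  induction i with
  | zero => simp [hsymmIdeal_succ, hsymmIdeal_zero]
  | succ i ih =>
    rw [hsymmIdeal_succ a (i + 1),
      Ideal.span_singleton_sup_eq_of_sub_mem (hsymm_sub_rename_succ_mem_hsymmIdeal n a i), ih,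
      hsymmIdeal_succ (a + 1) i, Ideal.map_sup, Ideal.map_span, Set.image_singleton,
      sup_left_comm]

lemma map_finSuccEquiv_hsymmIdeal (n a i : ℕ) :
    (hsymmIdeal (Fin (n + 1)) R a (i + 1)).map (finSuccEquiv R n).toRingEquiv =
      Ideal.span {finSuccEquiv R n (hsymm (Fin (n + 1)) R a)} ⊔
        (hsymmIdeal (Fin n) R (a + 1) i).map Polynomial.C := by
  rw [hsymmIdeal_fin_succ, hsymmIdeal, Ideal.map_sup, Ideal.map_span, Ideal.map_span,
    Ideal.map_span, Ideal.map_span, Set.image_singleton]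
  simp [Set.image_image, finSuccEquiv_rename_succ]

theorem isLeftRegular_mk_hsymmIdeal {n i : ℕ} (a : ℕ) (hi : i < n) :
    IsLeftRegular (Ideal.Quotient.mk (hsymmIdeal (Fin n) R a i) (hsymm (Fin n) R (a + i))) := by
  obtain ⟨m, rfl⟩ : ∃ m, n = m + 1 := ⟨n - 1, by omega⟩
  induction i generalizing m a with
  | zero =>
    rw [← Ideal.Quotient.isLeftRegular_mk_map_equiv_iff (finSuccEquiv R m).toRingEquiv,
      hsymmIdeal_zero, Ideal.map_bot, Ideal.Quotient.isLeftRegular_mk_iff]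
    intro p hp
    rw [Ideal.mem_bot] at hp ⊢
    exact (monic_finSuccEquiv_hsymm m a).mul_right_eq_zero_iff.mp hp
  | succ i ih =>
    obtain ⟨m, rfl⟩ : ∃ k, m = k + 1 := ⟨m - 1, by omega⟩
    rw [Ideal.Quotient.eq.mpr (hsymm_sub_rename_succ_mem_hsymmIdeal (m + 1) a i),
      ← Ideal.Quotient.isLeftRegular_mk_map_equiv_iff (finSuccEquiv R (m + 1)).toRingEquiv,
      map_finSuccEquiv_hsymmIdeal, AlgEquiv.coe_ringEquiv, finSuccEquiv_rename_succ]
    exact (monic_finSuccEquiv_hsymm (m + 1) a).isLeftRegular_mk_C (ih (a + 1) m (by omega))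

end CommRing

end MvPolynomial

theorem stmt_3_general (n k : ℕ) :
    ∀ i : Fin n,
      Function.Injective
        (fun g : MvPolynomial (Fin n) ℂ ⧸
            Ideal.span ((fun j : Fin n => hsymm (Fin n) ℂ (k - n + 1 + j)) '' {j | j < i}) =>
          Ideal.Quotient.mk _ (hsymm (Fin n) ℂ (k - n + 1 + i)) * g) := by
  intro i
  have hgens : (fun j : Fin n => hsymm (Fin n) ℂ (k - n + 1 + j)) '' {j | j < i} =
      (fun s => hsymm (Fin n) ℂ (k - n + 1 + s)) '' Set.Iio (i : ℕ) := by
    ext p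
    constructor
    · rintro ⟨j, hj, rfl⟩
      exact ⟨j, hj, rfl⟩
    · rintro ⟨s, hs, rfl⟩
      exact ⟨⟨s, hs.trans i.isLt⟩, hs, rfl⟩
  have := isLeftRegular_mk_hsymmIdeal (R := ℂ) (k - n + 1) i.isLt
  rwa [hsymmIdeal, ← hgens] at this

/-- For `n ≤ k`, the complete homogeneous symmetric polynomials
`h_{k-n+1}, h_{k-n+2}, …, h_k` in the variables `x_1, …, x_n` form a regular sequence in
`ℂ[x_1,…,x_n]`: for each `i`, multiplication by `h_{k-n+1+i}` is injective on the quotient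
of the polynomial ring by the ideal generated by the previous members of the sequence. -/
theorem stmt_3 (n k : ℕ) (hn : 0 < n) (hk : n ≤ k) :
    ∀ i : Fin n,
      Function.Injective
        (fun g : MvPolynomial (Fin n) ℂ ⧸
            Ideal.span ((fun j : Fin n => hsymm (Fin n) ℂ (k - n + 1 + j)) '' {j | j < i}) =>
          Ideal.Quotient.mk _ (hsymm (Fin n) ℂ (k - n + 1 + i)) * g) :=
  stmt_3_general n k
end

section
/- For n ≤ k, the common zero locus in C^n of the complete homogeneous symmetric polynomials h_{k-n+1}(x_1,...,x_n), h_{k-n+2}(x_1,...,x_n), ..., h_k(x_1,...,x_n) consists of the origin alone. -/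
open MvPolynomial

/-!
Splitting off the first variable gives `h_{d+1}(x, y) = x · h_d(x, y) + h_{d+1}(y)`. So if
`h_{m+1}, …, h_{m+n}` vanish at `(x, y) ∈ R × Rⁿ⁻¹`, then `h_{m+2}, …, h_{m+n}` vanish at `y`,
and by induction on `n` (with `m` shifted to `m + 1`) `y = 0`. Then `h_{m+1}(x, 0) = x ^ (m + 1)`
vanishes, hence `x = 0` in any reduced ring.
-/

namespace MvPolynomial

variable {R : Type*} [CommSemiring R]

theorem constantCoeff_hsymm {σ : Type*} [Fintype σ] [DecidableEq σ] {d : ℕ} (hd : d ≠ 0) :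
    constantCoeff (hsymm σ R d) = 0 := by
  simp [hsymm, map_multiset_prod, Multiset.map_map, hd]

theorem eval_hsymm_option_succ {σ : Type*} [Fintype σ] [DecidableEq σ] (a : Option σ → R)
    (d : ℕ) : eval a (hsymm (Option σ) R (d + 1)) =
      a none * eval a (hsymm (Option σ) R d) + eval (a ∘ some) (hsymm σ R (d + 1)) := by
  simp only [hsymm, map_sum, map_multiset_prod, Multiset.map_map, Function.comp_def, eval_X]
  rw [← Equiv.sum_comp (symOptionSuccEquiv (α := σ) (n := d)).symm
    (fun s : Sym (Option σ) (d + 1) => (s.1.map a).prod), Fintype.sum_sum_type, Finset.mul_sum]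
  simp [symOptionSuccEquiv, Sym.coe_cons, Sym.coe_map, Multiset.map_map]

theorem eval_hsymm_fin_succ {n : ℕ} (x : R) (a : Fin n → R) (d : ℕ) :
    eval (Fin.cons x a) (hsymm (Fin (n + 1)) R (d + 1)) =
      x * eval (Fin.cons x a) (hsymm (Fin (n + 1)) R d) + eval a (hsymm (Fin n) R (d + 1)) := by
  have h (m : ℕ) : eval (Fin.cons x a) (hsymm (Fin (n + 1)) R m) =
      eval (Fin.cons x a ∘ (_root_.finSuccEquiv n).symm) (hsymm (Option (Fin n)) R m) := by
    rw [← rename_hsymm _ R m (_root_.finSuccEquiv n).symm, eval_rename]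
  rw [h, h, eval_hsymm_option_succ]
  simp [Function.comp_def]

theorem eval_hsymm_cons_zero {n : ℕ} (x : R) (d : ℕ) :
    eval (Fin.cons x 0 : Fin (n + 1) → R) (hsymm (Fin (n + 1)) R d) = x ^ d := by
  induction d with
  | zero => simp
  | succ d ih =>
    rw [eval_hsymm_fin_succ, ih, eval_zero, constantCoeff_hsymm d.succ_ne_zero, pow_succ']
    ring

theorem eq_zero_of_eval_hsymm_eq_zero [IsReduced R] {n : ℕ} (m : ℕ) (a : Fin n → R)
    (ha : ∀ d, m < d → d ≤ m + n → eval a (hsymm (Fin n) R d) = 0) : a = 0 := by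
  induction n generalizing m with
  | zero => exact Subsingleton.elim _ _
  | succ n ih =>
    obtain ⟨x, a, rfl⟩ : ∃ x a, _ = Fin.cons x a := ⟨_, _, (Fin.cons_self_tail a).symm⟩
    have tail_vanishes (d : ℕ) (h₁ : m < d) (h₂ : d < m + n + 1) :
        eval a (hsymm (Fin n) R (d + 1)) = 0 := by
      have := eval_hsymm_fin_succ x a d
      rwa [ha _ (by omega) (by omega), ha _ h₁ h₂.le, mul_zero, zero_add, eq_comm] at this
    obtain rfl : a = 0 := ih (m + 1) a fun d h₁ h₂ => by
      obtain ⟨d, rfl⟩ := Nat.exists_eq_add_one.mpr (by omega : 0 < d)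
      exact tail_vanishes d (by omega) (by omega)
    have hx : x ^ (m + 1) = 0 := by
      rw [← eval_hsymm_cons_zero]
      exact ha _ (by omega) (by omega)
    rw [eq_zero_of_pow_eq_zero hx]
    exact Matrix.cons_zero_zero

end MvPolynomial

/-- For `n ≤ k`, the common zero locus in `ℂ^n` of the complete homogeneous symmetric
polynomials `h_{k-n+1}, h_{k-n+2}, …, h_k` consists of the origin alone. -/
theorem stmt_4 (n k : ℕ) (hk : n ≤ k) :
    {a : Fin n → ℂ | ∀ d, k - n + 1 ≤ d → d ≤ k → eval a (hsymm (Fin n) ℂ d) = 0} = {0} := by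
  ext a
  refine ⟨fun ha => eq_zero_of_eval_hsymm_eq_zero (k - n) a fun d h₁ h₂ => ?_, ?_⟩
  · exact ha d h₁ (by omega)
  · rintro rfl d h₁ -
    rw [eval_zero, constantCoeff_hsymm (by omega)]
end
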